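/- arXiv:1505.07432 — 8 statements merged into one kernel-verified Lean document; each statement's English description precedes it below -/
import Mathlib

section
/- Let (θ_l) be a family of angles in [0,π] indexed by a finite set with a probability distribution, and set C_l = cos θ_l, S_l = sin θ_l. If E_l[(sqrt(1+C_l) − 1)²] ≤ ε, then E_l[S_l] ≥ 1 − 9ε. -/
lemma key_ineq (s u : ℝ) (hs : 0 ≤ s) (hu : 0 ≤ u)
    (hsu : s ^ 2 = u ^ 2 * (2 - u ^ 2)) : s ≥ 1 - 9 * (u - 1) ^ 2 := by
  rcases le_or_gt (1 - 9 * (u - 1) ^ 2) 0 with h0 | h0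
  · linarith
  · nlinarith [sq_nonneg (s - (1 - 9 * (u - 1) ^ 2)), sq_nonneg (s + (1 - 9 * (u - 1) ^ 2)),
      sq_nonneg (u - 1), sq_nonneg u, mul_nonneg hs hu, sq_nonneg (u - 2/3), sq_nonneg (u - 4/3)]

/-- if `θ_l ∈ [0,π]` and `E_l[(√(1+cos θ_l) − 1)²] ≤ ε`,
then `E_l[sin θ_l] ≥ 1 − 9ε`. -/
theorem stmt_4 {ι : Type*} [Fintype ι] (p : ι → ℝ) (θ : ι → ℝ) (ε : ℝ)
    (hp : ∀ l, 0 ≤ p l) (hp1 : ∑ l, p l = 1)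
    (hθ : ∀ l, θ l ∈ Set.Icc 0 Real.pi)
    (h : ∑ l, p l * (Real.sqrt (1 + Real.cos (θ l)) - 1) ^ 2 ≤ ε) :
    ∑ l, p l * Real.sin (θ l) ≥ 1 - 9 * ε := by
  have key : ∀ l, Real.sin (θ l) ≥ 1 - 9 * (Real.sqrt (1 + Real.cos (θ l)) - 1) ^ 2 := by
    intro l
    have hc1 : -1 ≤ Real.cos (θ l) := Real.neg_one_le_cos _
    have hc2 : Real.cos (θ l) ≤ 1 := Real.cos_le_one _
    have hsn : 0 ≤ Real.sin (θ l) :=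
      Real.sin_nonneg_of_nonneg_of_le_pi (hθ l).1 (hθ l).2
    have hu : 0 ≤ Real.sqrt (1 + Real.cos (θ l)) := Real.sqrt_nonneg _
    have hu2 : Real.sqrt (1 + Real.cos (θ l)) ^ 2 = 1 + Real.cos (θ l) :=
      Real.sq_sqrt (by linarith)
    have hpyth := Real.sin_sq_add_cos_sq (θ l)
    exact key_ineq _ _ hsn hu (by rw [hu2]; nlinarith)
  have h1 : ∑ l, p l * Real.sin (θ l) ≥
      ∑ l, p l * (1 - 9 * (Real.sqrt (1 + Real.cos (θ l)) - 1) ^ 2) :=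
    Finset.sum_le_sum fun l _ => mul_le_mul_of_nonneg_left (key l) (hp l)
  have h2 : ∑ l, p l * (1 - 9 * (Real.sqrt (1 + Real.cos (θ l)) - 1) ^ 2)
      = ∑ l, p l - 9 * ∑ l, p l * (Real.sqrt (1 + Real.cos (θ l)) - 1) ^ 2 := by
    rw [Finset.mul_sum, ← Finset.sum_sub_distrib]
    congr 1; ext l; ring
  rw [h2, hp1] at h1
  linarith
end

section
/- For θ ∈ [0,π] with C = cos θ, S = sin θ, and ε = (sqrt(1+C) − 1)², one has S ≥ 1 − 9ε. -/
/-- for `θ ∈ [0,π]`, `C = cos θ`, `S = sin θ` and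
`ε = (√(1+C) − 1)²`, one has `S ≥ 1 − 9ε`. -/
theorem stmt_5 (θ : ℝ) (hθ : θ ∈ Set.Icc 0 Real.pi) :
    Real.sin θ ≥ 1 - 9 * (Real.sqrt (1 + Real.cos θ) - 1) ^ 2 := by
  obtain ⟨h0, h1⟩ := hθ
  have hC : -1 ≤ Real.cos θ := Real.neg_one_le_cos θ
  have hC' : Real.cos θ ≤ 1 := Real.cos_le_one θ
  set s := Real.sqrt (1 + Real.cos θ) with hs
  have hs0 : 0 ≤ s := Real.sqrt_nonneg _
  have hs2 : s ^ 2 = 1 + Real.cos θ := Real.sq_sqrt (by linarith)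
  have hsle : s ≤ 2 := by nlinarith
  have hsin0 : 0 ≤ Real.sin θ := Real.sin_nonneg_of_nonneg_of_le_pi h0 h1
  have hsin1 : Real.sin θ ≤ 1 := Real.sin_le_one θ
  have hpyth := Real.sin_sq_add_cos_sq θ
  nlinarith [mul_nonneg hsin0 (sub_nonneg.mpr hsin1), sq_nonneg (s - 1),
    mul_nonneg (mul_nonneg (sq_nonneg (s - 1)) (sub_nonneg.mpr hsle)) (by linarith : (0:ℝ) ≤ s + 4)]
end

section
/- Let ρ be a density operator on H_A ⊗ H_B, let M₀ = {M₀^a} and M₁ = {M₁^a} be two measurements on H_A with the same outcome set (collections of operators with Σ_a (M_i^a)† M_i^a = I), and let ρ_i = Σ_a |a⟩⟨a| ⊗ (M_i^a ρ (M_i^a)†) for i = 0,1 be the corresponding classical-quantum post-measurement states. Then the trace distance satisfies D(ρ₀, ρ₁) ≤ d_ρ(M₀, M₁), where d_ρ(M₀,M₁) = [Σ_a ‖M₀^a − M₁^a‖_ρ²]^{1/2} = [2 − 2 Re Σ_a tr((M₀^a)† M₁^a ρ)]^{1/2}. -/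
/-!
Let `S = √ρ` and let `P`, `Q` be the block-diagonal matrices with blocks `(M₀^a ⊗ 1) S` and
`(M₁^a ⊗ 1) S`. Then `ρ₀ = P Pᴴ`, `ρ₁ = Q Qᴴ`, the Frobenius norms of `P` and `Q` are `1`, and
`‖P - Q‖₂ = d_ρ(M₀, M₁)`. So it suffices to show `‖P Pᴴ - Q Qᴴ‖₁ ≤ ‖P - Q‖₂ ‖P + Q‖₂`, since
`‖P + Q‖₂ ≤ 2`. For this, pair the identity
`2 (P Pᴴ - Q Qᴴ) = (P - Q)(P + Q)ᴴ + (P + Q)(P - Q)ᴴ` with the sign of `P Pᴴ - Q Qᴴ`, which is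
a contraction, and use Cauchy–Schwarz for the Frobenius inner product.
-/

open Matrix WithLp
open scoped ComplexOrder Kronecker

namespace Matrix

section BlockDiagonalFst

variable {α m n p R : Type*} [DecidableEq α]

def blockDiagonalFst [Zero R] (P : α → Matrix m n R) : Matrix (α × m) (α × n) R :=
  (blockDiagonal P).submatrix Prod.swap Prod.swap

@[simp]
lemma blockDiagonalFst_apply [Zero R] (P : α → Matrix m n R) (a b : α) (x : m) (y : n) :
    blockDiagonalFst P (a, x) (b, y) = if a = b then P a x y else 0 :=
  blockDiagonal_apply P (x, a) (y, b)

lemma blockDiagonalFst_mul [Fintype α] [Fintype n] [NonUnitalNonAssocSemiring R]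
    (P : α → Matrix m n R) (Q : α → Matrix n p R) :
    blockDiagonalFst P * blockDiagonalFst Q = blockDiagonalFst fun a => P a * Q a := by
  rw [blockDiagonalFst, blockDiagonalFst, blockDiagonalFst, blockDiagonal_mul,
    ← submatrix_mul_equiv _ _ _ (Equiv.prodComm α n)]
  rfl

lemma blockDiagonalFst_conjTranspose [AddMonoid R] [StarAddMonoid R] (P : α → Matrix m n R) :
    (blockDiagonalFst P)ᴴ = blockDiagonalFst fun a => (P a)ᴴ := by
  rw [blockDiagonalFst, conjTranspose_submatrix, blockDiagonal_conjTranspose]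
  rfl

lemma blockDiagonalFst_sub [AddGroup R] (P Q : α → Matrix m n R) :
    blockDiagonalFst P - blockDiagonalFst Q = blockDiagonalFst (P - Q) := by
  rw [blockDiagonalFst, blockDiagonalFst, blockDiagonalFst, blockDiagonal_sub]
  rfl

lemma trace_blockDiagonalFst [Fintype α] [Fintype m] [AddCommMonoid R] (P : α → Matrix m m R) :
    (blockDiagonalFst P).trace = ∑ a, (P a).trace := by
  rw [← trace_blockDiagonal, blockDiagonalFst, trace, trace]
  exact Fintype.sum_equiv (Equiv.prodComm α m) _ _ fun _ => rfl

end BlockDiagonalFst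

section Kronecker

variable {ι l m n p R : Type*}

lemma sum_kronecker [NonUnitalNonAssocSemiring R] (s : Finset ι) (A : ι → Matrix l m R)
    (B : Matrix n p R) : (∑ i ∈ s, A i) ⊗ₖ B = ∑ i ∈ s, A i ⊗ₖ B := by
  ext
  simp [sum_apply, Finset.sum_mul]

variable [Fintype m] [Fintype n] [DecidableEq n] [CommSemiring R] [StarRing R]

lemma conjTranspose_kronecker_one_mul_kronecker_one (A B : Matrix m m R) :
    (A ⊗ₖ (1 : Matrix n n R))ᴴ * (B ⊗ₖ (1 : Matrix n n R)) = (Aᴴ * B) ⊗ₖ (1 : Matrix n n R) := by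
  rw [conjTranspose_kronecker, conjTranspose_one, ← mul_kronecker_mul, Matrix.one_mul]

lemma sum_conjTranspose_mul_kronecker_one [Fintype ι] [DecidableEq m] {M : ι → Matrix m m R}
    (hM : ∑ i, (M i)ᴴ * M i = 1) :
    ∑ i, (M i ⊗ₖ (1 : Matrix n n R))ᴴ * (M i ⊗ₖ (1 : Matrix n n R)) = 1 := by
  simp_rw [conjTranspose_kronecker_one_mul_kronecker_one]
  rw [← sum_kronecker, hM, one_kronecker_one]

end Kronecker

open scoped MatrixOrder in
lemma IsHermitian.exists_contraction_mul_eq_abs {n : Type*} [Fintype n] [DecidableEq n]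
    {Δ D : Matrix n n ℂ} (hΔ : Δ.IsHermitian) (hD : D.PosSemidef) (hD2 : D * D = Δᴴ * Δ) :
    ∃ W : Matrix n n ℂ, (1 - Wᴴ * W).PosSemidef ∧ W * Δ = D := by
  have hsa : IsSelfAdjoint Δ := hΔ
  have hcont (f : ℝ → ℝ) : ContinuousOn f (spectrum ℝ Δ) := Δ.finite_real_spectrum.continuousOn f
  let sgn : ℝ → ℝ := fun x => SignType.sign x
  refine ⟨cfc sgn Δ, ?_, ?_⟩
  · rw [← star_eq_conjTranspose, (cfc_predicate sgn Δ).star_eq,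
      ← cfc_mul sgn sgn Δ (hcont _) (hcont _), ← cfc_one ℝ Δ, ← cfc_sub _ _ Δ (hcont _) (hcont _),
      ← nonneg_iff_posSemidef]
    refine cfc_nonneg fun x _ => ?_
    rcases lt_trichotomy x 0 with h | h | h <;> simp [sgn, h]
  · have hD_eq : D = cfc (‖·‖) Δ := by
      rw [← CFC.abs_eq_cfc_norm Δ, CFC.abs, star_eq_conjTranspose, ← hD2,
        CFC.sqrt_mul_self D hD.nonneg]
    conv_lhs => enter [2]; rw [← cfc_id' ℝ Δ]
    rw [hD_eq, ← cfc_mul _ _ Δ (hcont _) (hcont _)]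
    exact cfc_congr fun x _ => (sign_mul_self x).trans (Real.norm_eq_abs x).symm

end Matrix

lemma re_trace_sum_conjTranspose_sub_mul_sub_mul {α n : Type*} [Fintype α] [Fintype n]
    [DecidableEq n] {ρ : Matrix n n ℂ} (hρ : ρ.IsHermitian) (hρtr : ρ.trace = 1)
    {E₀ E₁ : α → Matrix n n ℂ} (hE₀ : ∑ a, (E₀ a)ᴴ * E₀ a = 1) (hE₁ : ∑ a, (E₁ a)ᴴ * E₁ a = 1) :
    ((∑ a, (E₀ a - E₁ a)ᴴ * (E₀ a - E₁ a)) * ρ).trace.re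
      = 2 - 2 * (∑ a, ((E₀ a)ᴴ * E₁ a * ρ).trace).re := by
  set T := ∑ a, (E₀ a)ᴴ * E₁ a
  have hexpand : ∑ a, (E₀ a - E₁ a)ᴴ * (E₀ a - E₁ a)
      = ∑ a, (E₀ a)ᴴ * E₀ a + ∑ a, (E₁ a)ᴴ * E₁ a - T - Tᴴ := by
    simp only [T, conjTranspose_sum, conjTranspose_mul, conjTranspose_conjTranspose,
      ← Finset.sum_add_distrib, ← Finset.sum_sub_distrib, conjTranspose_sub, Matrix.sub_mul,
      Matrix.mul_sub]
    refine Finset.sum_congr rfl fun a _ => ?_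
    abel
  have hadj : (Tᴴ * ρ).trace.re = (T * ρ).trace.re := by
    rw [← hρ.eq, ← conjTranspose_mul, trace_conjTranspose, Complex.star_def, Complex.conj_re,
      hρ.eq, trace_mul_comm]
  rw [← trace_sum, ← Finset.sum_mul, hexpand, hE₀, hE₁]
  simp only [Matrix.sub_mul, Matrix.add_mul, Matrix.one_mul, trace_sub, trace_add, hρtr,
    Complex.sub_re, Complex.add_re, Complex.one_re, hadj]
  ring

section Frobenius

attribute [local instance] Matrix.frobeniusNormedAddCommGroup

variable {α m n : Type*} [Fintype m] [Fintype n]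

lemma frobenius_norm_eq_norm_vec (A : Matrix m n ℂ) : ‖A‖ = ‖toLp 2 A.vec‖ := by
  rw [frobenius_norm_def, EuclideanSpace.norm_eq, Real.sqrt_eq_rpow, Fintype.sum_prod_type,
    Finset.sum_comm]
  simp [vec]

lemma re_trace_conjTranspose_mul_le (A B : Matrix m n ℂ) :
    (Aᴴ * B).trace.re ≤ ‖A‖ * ‖B‖ := by
  rw [frobenius_norm_eq_norm_vec, frobenius_norm_eq_norm_vec, ← star_vec_dotProduct_vec]
  have := re_inner_le_norm (𝕜 := ℂ) (toLp 2 A.vec) (toLp 2 B.vec)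
  rwa [EuclideanSpace.inner_eq_star_dotProduct, dotProduct_comm] at this

lemma frobenius_norm_sq_eq_re_trace (A : Matrix m n ℂ) : ‖A‖ ^ 2 = (Aᴴ * A).trace.re := by
  rw [frobenius_norm_eq_norm_vec, ← star_vec_dotProduct_vec, ← RCLike.re_to_complex,
    ← inner_self_eq_norm_sq (𝕜 := ℂ), EuclideanSpace.inner_eq_star_dotProduct, dotProduct_comm]

lemma frobenius_norm_mul_le_of_posSemidef_one_sub [DecidableEq m] {W : Matrix m m ℂ}
    (hW : (1 - Wᴴ * W).PosSemidef) (A : Matrix m n ℂ) : ‖W * A‖ ≤ ‖A‖ := by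
  have h := (hW.conjTranspose_mul_mul_same A).trace_nonneg
  rw [Matrix.mul_sub, Matrix.sub_mul, Matrix.mul_one, trace_sub, sub_nonneg] at h
  refine (sq_le_sq₀ (norm_nonneg _) (norm_nonneg _)).mp ?_
  rw [frobenius_norm_sq_eq_re_trace, frobenius_norm_sq_eq_re_trace, conjTranspose_mul]
  simpa only [Matrix.mul_assoc] using (Complex.le_def.mp h).1

lemma re_trace_mul_mul_conjTranspose_le [DecidableEq m] {W : Matrix m m ℂ}
    (hW : (1 - Wᴴ * W).PosSemidef) (A B : Matrix m n ℂ) :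
    (W * (A * Bᴴ)).trace.re ≤ ‖A‖ * ‖B‖ := by
  rw [← Matrix.mul_assoc, trace_mul_comm, mul_comm ‖A‖]
  exact (re_trace_conjTranspose_mul_le B (W * A)).trans
    (mul_le_mul_of_nonneg_left (frobenius_norm_mul_le_of_posSemidef_one_sub hW A) (norm_nonneg _))

lemma frobenius_norm_sq_mul_of_conjTranspose_eq_self (K S : Matrix n n ℂ) (hS : Sᴴ = S) :
    ‖K * S‖ ^ 2 = (Kᴴ * K * (S * S)).trace.re := by
  rw [frobenius_norm_sq_eq_re_trace, conjTranspose_mul, hS, Matrix.mul_assoc, trace_mul_comm]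
  simp only [Matrix.mul_assoc]

lemma frobenius_norm_sq_blockDiagonalFst [Fintype α] [DecidableEq α] (P : α → Matrix m n ℂ) :
    ‖blockDiagonalFst P‖ ^ 2 = ∑ a, ‖P a‖ ^ 2 := by
  simp only [frobenius_norm_sq_eq_re_trace, blockDiagonalFst_conjTranspose, blockDiagonalFst_mul,
    trace_blockDiagonalFst, Complex.re_sum]

lemma re_trace_le_norm_sub_mul_norm_add [DecidableEq m] {P Q : Matrix m n ℂ} {D : Matrix m m ℂ}
    (hD : D.PosSemidef) (hD2 : D * D = (P * Pᴴ - Q * Qᴴ)ᴴ * (P * Pᴴ - Q * Qᴴ)) :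
    D.trace.re ≤ ‖P - Q‖ * ‖P + Q‖ := by
  have hΔ : (P * Pᴴ - Q * Qᴴ).IsHermitian :=
    (isHermitian_mul_conjTranspose_self P).sub (isHermitian_mul_conjTranspose_self Q)
  obtain ⟨W, hW, hWΔ⟩ := hΔ.exists_contraction_mul_eq_abs hD hD2
  have hsplit : D + D = W * ((P - Q) * (P + Q)ᴴ) + W * ((P + Q) * (P - Q)ᴴ) := by
    rw [← hWΔ, ← Matrix.mul_add, ← Matrix.mul_add, conjTranspose_add, conjTranspose_sub]
    simp only [Matrix.add_mul, Matrix.sub_mul, Matrix.mul_add, Matrix.mul_sub]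
    abel
  have h := congrArg (fun A => A.trace.re) hsplit
  simp only [trace_add, Complex.add_re] at h
  linarith [re_trace_mul_mul_conjTranspose_le hW (P - Q) (P + Q),
    re_trace_mul_mul_conjTranspose_le hW (P + Q) (P - Q), mul_comm ‖P - Q‖ ‖P + Q‖]

open scoped MatrixOrder in
theorem trace_distance_blockDiagonalFst_le [Fintype α] [DecidableEq α] [DecidableEq n]
    {ρ : Matrix n n ℂ} (hρ : ρ.PosSemidef) (hρtr : ρ.trace = 1)
    {E₀ E₁ : α → Matrix n n ℂ} (hE₀ : ∑ a, (E₀ a)ᴴ * E₀ a = 1) (hE₁ : ∑ a, (E₁ a)ᴴ * E₁ a = 1)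
    {D : Matrix (α × n) (α × n) ℂ} (hD : D.PosSemidef)
    (hD2 : D * D = (blockDiagonalFst (fun a => E₀ a * ρ * (E₀ a)ᴴ)
        - blockDiagonalFst (fun a => E₁ a * ρ * (E₁ a)ᴴ))ᴴ
      * (blockDiagonalFst (fun a => E₀ a * ρ * (E₀ a)ᴴ)
        - blockDiagonalFst (fun a => E₁ a * ρ * (E₁ a)ᴴ))) :
    1 / 2 * D.trace.re ≤ √(2 - 2 * (∑ a, ((E₀ a)ᴴ * E₁ a * ρ).trace).re) := by
  set S := CFC.sqrt ρ
  have hS : Sᴴ = S := (CFC.sqrt_nonneg ρ).posSemidef.1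
  have hSS : S * S = ρ := CFC.sqrt_mul_sqrt_self ρ hρ.nonneg
  have hfactor (E : α → Matrix n n ℂ) : blockDiagonalFst (fun a => E a * ρ * (E a)ᴴ)
      = blockDiagonalFst (fun a => E a * S) * (blockDiagonalFst fun a => E a * S)ᴴ := by
    simp only [blockDiagonalFst_conjTranspose, blockDiagonalFst_mul, conjTranspose_mul, hS,
      ← hSS, Matrix.mul_assoc]
  have hnorm_sq (E : α → Matrix n n ℂ) : ‖blockDiagonalFst fun a => E a * S‖ ^ 2
      = ((∑ a, (E a)ᴴ * E a) * ρ).trace.re := by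
    simp only [frobenius_norm_sq_blockDiagonalFst,
      frobenius_norm_sq_mul_of_conjTranspose_eq_self _ _ hS, hSS, ← Complex.re_sum, trace_sum,
      Finset.sum_mul]
  have hnorm (E : α → Matrix n n ℂ) (hE : ∑ a, (E a)ᴴ * E a = 1) :
      ‖blockDiagonalFst fun a => E a * S‖ = 1 := by
    rw [← pow_eq_one_iff_of_nonneg (norm_nonneg _) two_ne_zero, hnorm_sq, hE, Matrix.one_mul,
      hρtr, Complex.one_re]
  set P := blockDiagonalFst fun a => E₀ a * S
  set Q := blockDiagonalFst fun a => E₁ a * S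
  have hdist : ‖P - Q‖ = √(2 - 2 * (∑ a, ((E₀ a)ᴴ * E₁ a * ρ).trace).re) := by
    rw [← re_trace_sum_conjTranspose_sub_mul_sub_mul hρ.1 hρtr hE₀ hE₁, ← hnorm_sq,
      Real.sqrt_sq (norm_nonneg _), blockDiagonalFst_sub]
    simp only [Pi.sub_def, Matrix.sub_mul]
  rw [hfactor, hfactor] at hD2
  calc 1 / 2 * D.trace.re ≤ 1 / 2 * (‖P - Q‖ * ‖P + Q‖) := by
        gcongr; exact re_trace_le_norm_sub_mul_norm_add hD hD2
    _ ≤ 1 / 2 * (‖P - Q‖ * (‖P‖ + ‖Q‖)) := by gcongr; exact norm_add_le P Q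
    _ = ‖P - Q‖ := by rw [hnorm E₀ hE₀, hnorm E₁ hE₁]; ring
    _ = _ := hdist

end Frobenius

/-- the trace distance between the classical–quantum
post-measurement states of two measurements `M₀, M₁` (acting on the `A` part of
a state `ρ` on `H_A ⊗ H_B`) is at most
`d_ρ(M₀,M₁) = sqrt (2 − 2 Re Σ_a tr((M₀^a)ᴴ M₁^a ρ))`. -/
theorem stmt_7 {nA nB : ℕ} {α : Type*} [Fintype α] [DecidableEq α]
    (ρ : Matrix (Fin nA × Fin nB) (Fin nA × Fin nB) ℂ)
    (hρ : ρ.PosSemidef) (hρtr : ρ.trace = 1)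
    (M₀ M₁ : α → Matrix (Fin nA) (Fin nA) ℂ)
    (hM₀ : ∑ a, (M₀ a)ᴴ * M₀ a = 1) (hM₁ : ∑ a, (M₁ a)ᴴ * M₁ a = 1)
    -- the two classical–quantum post-measurement states
    (σ₀ σ₁ : Matrix (α × (Fin nA × Fin nB)) (α × (Fin nA × Fin nB)) ℂ)
    (hσ₀ : ∀ a b x y, σ₀ (a, x) (b, y) =
      if a = b then (((M₀ a ⊗ₖ (1 : Matrix (Fin nB) (Fin nB) ℂ)) * ρ * (M₀ a ⊗ₖ (1 : Matrix (Fin nB) (Fin nB) ℂ))ᴴ) x y) else 0)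
    (hσ₁ : ∀ a b x y, σ₁ (a, x) (b, y) =
      if a = b then (((M₁ a ⊗ₖ (1 : Matrix (Fin nB) (Fin nB) ℂ)) * ρ * (M₁ a ⊗ₖ (1 : Matrix (Fin nB) (Fin nB) ℂ))ᴴ) x y) else 0)
    -- `Dm` is the operator absolute value `|σ₀ − σ₁|`
    (Dm : Matrix (α × (Fin nA × Fin nB)) (α × (Fin nA × Fin nB)) ℂ)
    (hDm : Dm.PosSemidef) (hDm2 : Dm * Dm = (σ₀ - σ₁)ᴴ * (σ₀ - σ₁)) :
    -- trace distance ≤ d_ρ(M₀, M₁)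
    (1 / 2 : ℝ) * (Dm.trace).re ≤
      Real.sqrt (2 - 2 * (∑ a, ((((M₀ a)ᴴ * M₁ a) ⊗ₖ (1 : Matrix (Fin nB) (Fin nB) ℂ))
        * ρ).trace).re) := by
  have hσ₀_block : σ₀ = blockDiagonalFst fun a => (M₀ a ⊗ₖ 1) * ρ * (M₀ a ⊗ₖ 1)ᴴ := by
    ext ⟨a, x⟩ ⟨b, y⟩
    rw [hσ₀, blockDiagonalFst_apply]
  have hσ₁_block : σ₁ = blockDiagonalFst fun a => (M₁ a ⊗ₖ 1) * ρ * (M₁ a ⊗ₖ 1)ᴴ := by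
    ext ⟨a, x⟩ ⟨b, y⟩
    rw [hσ₁, blockDiagonalFst_apply]
  rw [hσ₀_block, hσ₁_block] at hDm2
  simp_rw [← conjTranspose_kronecker_one_mul_kronecker_one]
  exact trace_distance_blockDiagonalFst_le hρ hρtr (sum_conjTranspose_mul_kronecker_one hM₀)
    (sum_conjTranspose_mul_kronecker_one hM₁) hDm hDm2
end

section
/- Let ρ be a density operator on H ⊗ H', T an operator on H with ‖T‖ ≤ c for a constant c, and R a reflection on H. Suppose there is a reflection S on H' that is ε-consistent with R on ρ, meaning (1 + tr((R⊗S)ρ))/2 ≥ 1 − ε. Then |tr(RTRρ) − tr(Tρ)| ≤ O(c·sqrt(ε)). -/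
open Matrix
open scoped ComplexOrder Kronecker

/-!
Put `u = R ⊗ S`, `b = T ⊗ 1` and `p = 1 - u`. Then `u b u = (R T R) ⊗ 1`, `p * p = 2 p` and
`u b u - b = -(p (b u) + b p)`. The functional `ω X = tr (X ρ)` is a state, so by Cauchy–Schwarz
both terms are at most `‖b‖ √ω(p * p) = ‖b‖ √(2 (1 - Re ω u)) ≤ 2 ‖b‖ √ε`, and `‖b‖ ≤ ‖T‖`.
-/

namespace PositiveLinearMap

variable {A : Type*} [CStarAlgebra A] [PartialOrder A] [StarOrderedRing A] (f : A →ₚ[ℂ] ℂ)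

theorem norm_apply_star_mul_le (a b : A) :
    ‖f (star a * b)‖ ≤ √(f (star a * a)).re * √(f (star b * b)).re :=
  norm_inner_le_norm (𝕜 := ℂ) (f.toPreGNS a) (f.toPreGNS b)

theorem sqrt_re_apply_star_mul_self_le (hf : f 1 = 1) (b : A) :
    √(f (star b * b)).re ≤ ‖b‖ := by
  have h := (Complex.le_def.mp <|
    OrderHomClass.mono f (CStarAlgebra.star_mul_le_algebraMap_norm_sq (a := b))).1
  rw [Algebra.algebraMap_eq_smul_one, map_smul_of_tower, hf, Complex.real_smul, mul_one,
    Complex.ofReal_re] at h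
  exact Real.sqrt_le_iff.mpr ⟨norm_nonneg b, h⟩

theorem norm_apply_conj_sub_le (hf : f 1 = 1) {u : A} (hu : IsSelfAdjoint u) (hu2 : u * u = 1)
    (b : A) : ‖f (u * b * u) - f b‖ ≤ 4 * ‖b‖ * √((1 - (f u).re) / 2) := by
  set p := 1 - u
  have hp : star p = p := by simp [p, hu.star_eq]
  have hu_unitary : u ∈ unitary A := Unitary.mem_iff.mpr (by rw [hu.star_eq]; exact ⟨hu2, hu2⟩)
  have hpp : √(f (star p * p)).re = 2 * √((1 - (f u).re) / 2) := by
    have hpp : star p * p = (2 : ℝ) • (1 - u) := by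
      rw [hp, show p * p = 1 - u - u + u * u by simp only [p]; noncomm_ring, hu2]; module
    rw [hpp, map_smul_of_tower, map_sub, hf, Complex.real_smul, Complex.re_ofReal_mul,
      Complex.sub_re, Complex.one_re,
      show 2 * (1 - (f u).re) = 2 ^ 2 * ((1 - (f u).re) / 2) by ring,
      Real.sqrt_mul (by norm_num), Real.sqrt_sq (by norm_num)]
  have hsplit : u * b * u - b = -(star p * (b * u) + star (star b) * p) := by
    rw [hp, star_star]; simp only [p]; noncomm_ring
  calc ‖f (u * b * u) - f b‖
      = ‖f (star p * (b * u)) + f (star (star b) * p)‖ := by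
        rw [← map_sub, hsplit, map_neg, norm_neg, map_add]
    _ ≤ √(f (star p * p)).re * ‖b * u‖ + ‖star b‖ * √(f (star p * p)).re := by
        refine (norm_add_le _ _).trans (add_le_add ?_ ?_)
        · exact (f.norm_apply_star_mul_le _ _).trans (by
            gcongr; exact f.sqrt_re_apply_star_mul_self_le hf _)
        · exact (f.norm_apply_star_mul_le _ _).trans (by
            gcongr; exact f.sqrt_re_apply_star_mul_self_le hf _)
    _ = 4 * ‖b‖ * √((1 - (f u).re) / 2) := by
        rw [hpp, CStarRing.norm_mul_mem_unitary b hu_unitary, norm_star]; ring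

end PositiveLinearMap

namespace Matrix

theorem sub_kronecker {l m n p α : Type*} [NonUnitalNonAssocRing α] (A B : Matrix l m α)
    (C : Matrix n p α) : (A - B) ⊗ₖ C = A ⊗ₖ C - B ⊗ₖ C := by
  ext ⟨i, k⟩ ⟨j, l⟩
  simp [sub_mul]

open scoped MatrixOrder Norms.L2Operator

variable {ι κ : Type*} [Fintype ι] [Fintype κ] [DecidableEq κ]

noncomputable def PosSemidef.traceFunctional [DecidableEq ι] {ρ : Matrix ι ι ℂ}
    (hρ : ρ.PosSemidef) : Matrix ι ι ℂ →ₚ[ℂ] ℂ :=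
  .mk₀ (traceLinearMap ι ℂ ℂ ∘ₗ LinearMap.mulRight ℂ ρ) fun X hX => by
    obtain ⟨B, rfl⟩ := CStarAlgebra.nonneg_iff_eq_star_mul_self.mp hX
    have h : (star B * B * ρ).trace = (B * ρ * Bᴴ).trace := by
      rw [mul_assoc, trace_mul_comm, mul_assoc, star_eq_conjTranspose, mul_assoc]
    simpa [h] using (hρ.mul_mul_conjTranspose_same B).trace_nonneg

@[simp]
lemma PosSemidef.traceFunctional_apply [DecidableEq ι] {ρ : Matrix ι ι ℂ} (hρ : ρ.PosSemidef)
    (X : Matrix ι ι ℂ) : hρ.traceFunctional X = (X * ρ).trace := rfl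

theorem kronecker_one_le_kronecker_one {A B : Matrix ι ι ℂ} (h : A ≤ B) :
    A ⊗ₖ (1 : Matrix κ κ ℂ) ≤ B ⊗ₖ 1 := by
  rw [le_iff, ← sub_kronecker]
  exact (le_iff.mp h).kronecker PosSemidef.one

theorem l2_opNorm_kronecker_one_le [DecidableEq ι] (T : Matrix ι ι ℂ) :
    ‖T ⊗ₖ (1 : Matrix κ κ ℂ)‖ ≤ ‖T‖ := by
  have hstar : star (T ⊗ₖ (1 : Matrix κ κ ℂ)) * (T ⊗ₖ 1) = (star T * T) ⊗ₖ 1 := by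
    rw [star_eq_conjTranspose, conjTranspose_kronecker, conjTranspose_one, ← mul_kronecker_mul,
      one_mul, star_eq_conjTranspose]
  have halg (r : ℝ) : algebraMap ℝ (Matrix (ι × κ) (ι × κ) ℂ) r
      = algebraMap ℝ (Matrix ι ι ℂ) r ⊗ₖ (1 : Matrix κ κ ℂ) := by
    rw [Algebra.algebraMap_eq_smul_one, Algebra.algebraMap_eq_smul_one, smul_kronecker,
      one_kronecker_one]
  have hle : star (T ⊗ₖ (1 : Matrix κ κ ℂ)) * (T ⊗ₖ 1) ≤ algebraMap ℝ _ (‖T‖ ^ 2) := by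
    rw [hstar, halg]
    exact kronecker_one_le_kronecker_one CStarAlgebra.star_mul_le_algebraMap_norm_sq
  have h := (CStarAlgebra.norm_le_iff_le_algebraMap _ (by positivity)
    (star_mul_self_nonneg _)).mpr hle
  rw [CStarRing.norm_star_mul_self, ← sq] at h
  exact (pow_le_pow_iff_left₀ (norm_nonneg _) (norm_nonneg _) two_ne_zero).mp h

theorem norm_trace_conj_kronecker_one_sub_le [DecidableEq ι] {ρ : Matrix (ι × κ) (ι × κ) ℂ}
    (hρ : ρ.PosSemidef) (hρ1 : ρ.trace = 1) {R : Matrix ι ι ℂ} {S : Matrix κ κ ℂ}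
    (hR : Rᴴ = R) (hR2 : R * R = 1) (hS : Sᴴ = S) (hS2 : S * S = 1) (T : Matrix ι ι ℂ) :
    ‖(((R * T * R) ⊗ₖ (1 : Matrix κ κ ℂ)) * ρ).trace - ((T ⊗ₖ (1 : Matrix κ κ ℂ)) * ρ).trace‖
      ≤ 4 * ‖T‖ * √((1 - (((R ⊗ₖ S) * ρ).trace).re) / 2) := by
  have hu : IsSelfAdjoint (R ⊗ₖ S) := by
    rw [IsSelfAdjoint, star_eq_conjTranspose, conjTranspose_kronecker, hR, hS]
  have hu2 : (R ⊗ₖ S) * (R ⊗ₖ S) = 1 := by rw [← mul_kronecker_mul, hR2, hS2, one_kronecker_one]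
  have hconj : (R ⊗ₖ S) * (T ⊗ₖ 1) * (R ⊗ₖ S) = (R * T * R) ⊗ₖ (1 : Matrix κ κ ℂ) := by
    rw [← mul_kronecker_mul, ← mul_kronecker_mul, mul_one, hS2]
  have h := hρ.traceFunctional.norm_apply_conj_sub_le (by simp [hρ1]) hu hu2 (T ⊗ₖ 1)
  simp only [PosSemidef.traceFunctional_apply, hconj] at h
  exact h.trans (by gcongr; exact l2_opNorm_kronecker_one_le T)

end Matrix

/-- there is an absolute constant `K` such that for every state
`ρ` on `H ⊗ H'`, every operator `T` on `H` with operator norm at most `c`, and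
every reflection `R` on `H` admitting an `ε`-consistent reflection `S` on `H'`
(i.e. `(1 + tr((R⊗S)ρ))/2 ≥ 1 − ε`), one has
`|tr(R T R ρ) − tr(T ρ)| ≤ K c √ε`. -/
theorem stmt_12 :
    ∃ K : ℝ, 0 < K ∧
      ∀ (n m : ℕ) (ρ : Matrix (Fin n × Fin m) (Fin n × Fin m) ℂ)
        (T R : Matrix (Fin n) (Fin n) ℂ) (S : Matrix (Fin m) (Fin m) ℂ) (c ε : ℝ),
        ρ.PosSemidef → ρ.trace = 1 →
        Rᴴ = R → R * R = 1 → Sᴴ = S → S * S = 1 →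
        ‖(Matrix.toEuclideanCLM (𝕜 := ℂ) T :
            EuclideanSpace ℂ (Fin n) →L[ℂ] EuclideanSpace ℂ (Fin n))‖ ≤ c →
        0 ≤ ε →
        (1 + (((R ⊗ₖ S) * ρ).trace).re) / 2 ≥ 1 - ε →
        ‖(((R * T * R) ⊗ₖ (1 : Matrix (Fin m) (Fin m) ℂ)) * ρ).trace
            - ((T ⊗ₖ (1 : Matrix (Fin m) (Fin m) ℂ)) * ρ).trace‖
          ≤ K * c * Real.sqrt ε := by
  refine ⟨4, by norm_num, fun n m ρ T R S c ε hρ hρ1 hR hR2 hS hS2 hT _ hcons => ?_⟩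
  have hc : 0 ≤ c := (norm_nonneg _).trans hT
  refine (norm_trace_conj_kronecker_one_sub_le hρ hρ1 hR hR2 hS hS2 T).trans ?_
  exact mul_le_mul (by gcongr; exact hT) (Real.sqrt_le_sqrt (by linarith)) (Real.sqrt_nonneg _)
    (by positivity)
end

section
/- Approximate stabilization of the intermediate step: let ρ be a density operator on H ⊗ H', R a reflection on H, S a reflection on H' with (1 + tr((R⊗S)ρ))/2 ≥ 1 − ε, and T an operator on H with ‖T‖ ≤ c. Then |tr(RTρ) − tr((T⊗S)ρ)| ≤ O(c·sqrt(ε)) and |tr(TRρ) − tr((T⊗S)ρ)| ≤ O(c·sqrt(ε)). -/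
/-!
Put `P = R ⊗ S` and `X = T ⊗ S`. Since `S² = 1`, `P X = R T ⊗ 1` and `X P = T R ⊗ 1`, so the two
differences are `tr((P - 1) X ρ)` and `tr(X (P - 1) ρ)`. By the Cauchy–Schwarz inequality for the
semi-inner product `⟪A, B⟫ = tr(B ρ Aᴴ)` they are bounded by `√tr((P - 1)² ρ) · √tr(Xᴴ X ρ)` (resp.
with `X Xᴴ`). As `P` is a reflection, `tr((P - 1)² ρ) = 2 - 2 tr(P ρ) ≤ 4 ε`, and
`Xᴴ X = Tᴴ T ⊗ 1 ≤ c² • 1` gives `tr(Xᴴ X ρ) ≤ c²`; hence both differences are at most `2 c √ε`.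
-/

open Matrix
open scoped ComplexOrder Kronecker

section State

variable {ι : Type*} [Fintype ι] {ρ : Matrix ι ι ℂ}

theorem norm_trace_mul_mul_le (hρ : ρ.PosSemidef) (M N : Matrix ι ι ℂ) :
    ‖(M * N * ρ).trace‖ ≤ √(M * Mᴴ * ρ).trace.re * √(Nᴴ * N * ρ).trace.re := by
  let := ρ.toMatrixSeminormedAddCommGroup hρ
  let := ρ.toMatrixInnerProductSpace hρ
  have h : ‖(N * ρ * Mᴴᴴ).trace‖ ≤ √(Mᴴ * ρ * Mᴴᴴ).trace.re * √(N * ρ * Nᴴ).trace.re :=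
    norm_inner_le_norm (𝕜 := ℂ) Mᴴ N
  rwa [conjTranspose_conjTranspose, trace_mul_cycle, trace_mul_cycle Mᴴ,
    trace_mul_cycle N ρ] at h

open scoped MatrixOrder in
theorem Matrix.PosSemidef.re_trace_mul_nonneg {Q : Matrix ι ι ℂ} (hQ : Q.PosSemidef)
    (hρ : ρ.PosSemidef) : 0 ≤ (Q * ρ).trace.re := by
  classical
  obtain ⟨B, rfl⟩ := CStarAlgebra.nonneg_iff_eq_star_mul_self.mp hQ.nonneg
  rw [star_eq_conjTranspose, mul_assoc, trace_mul_comm]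
  exact (Complex.nonneg_iff.mp (hρ.mul_mul_conjTranspose_same B).trace_nonneg).1

variable [DecidableEq ι] {P : Matrix ι ι ℂ}

theorem re_trace_sub_one_mul_sub_one_mul (hρ₁ : ρ.trace = 1) (hP₂ : P * P = 1) :
    ((P - 1) * (P - 1) * ρ).trace.re = 2 - 2 * (P * ρ).trace.re := by
  have h : (P - 1) * (P - 1) * ρ = ρ + ρ - P * ρ - P * ρ := by
    rw [show (P - 1) * (P - 1) = P * P - P - P + 1 by noncomm_ring, hP₂]
    noncomm_ring
  rw [h, trace_sub, trace_sub, trace_add, hρ₁]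
  simp only [Complex.sub_re, Complex.add_re, Complex.one_re]
  ring

theorem norm_trace_reflection_mul_sub_le (hρ : ρ.PosSemidef) (hρ₁ : ρ.trace = 1)
    (hPH : Pᴴ = P) (hP₂ : P * P = 1) (X : Matrix ι ι ℂ) :
    ‖(P * X * ρ).trace - (X * ρ).trace‖ ≤
      √(2 - 2 * (P * ρ).trace.re) * √(Xᴴ * X * ρ).trace.re := by
  have h := norm_trace_mul_mul_le hρ (P - 1) X
  rwa [conjTranspose_sub, conjTranspose_one, hPH, re_trace_sub_one_mul_sub_one_mul hρ₁ hP₂,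
    sub_mul, sub_mul, one_mul, trace_sub] at h

theorem norm_trace_mul_reflection_sub_le (hρ : ρ.PosSemidef) (hρ₁ : ρ.trace = 1)
    (hPH : Pᴴ = P) (hP₂ : P * P = 1) (X : Matrix ι ι ℂ) :
    ‖(X * P * ρ).trace - (X * ρ).trace‖ ≤
      √(X * Xᴴ * ρ).trace.re * √(2 - 2 * (P * ρ).trace.re) := by
  have h := norm_trace_mul_mul_le hρ X (P - 1)
  rwa [conjTranspose_sub, conjTranspose_one, hPH, re_trace_sub_one_mul_sub_one_mul hρ₁ hP₂,
    mul_sub, mul_one, sub_mul, trace_sub] at h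

end State

section OperatorNorm

open scoped Matrix.Norms.L2Operator MatrixOrder

variable {n : Type*} [Fintype n] [DecidableEq n] {T : Matrix n n ℂ} {c : ℝ}

theorem posSemidef_sq_smul_one_sub_conjTranspose_mul_self
    (hT : ‖(toEuclideanCLM (𝕜 := ℂ) T : EuclideanSpace ℂ n →L[ℂ] EuclideanSpace ℂ n)‖ ≤ c) :
    (c ^ 2 • 1 - Tᴴ * T).PosSemidef := by
  have h : Tᴴ * T ≤ algebraMap ℝ _ (‖T‖ ^ 2) := CStarAlgebra.star_mul_le_algebraMap_norm_sq
  have hc : algebraMap ℝ (Matrix n n ℂ) (‖T‖ ^ 2) ≤ algebraMap ℝ _ (c ^ 2) := by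
    gcongr
    exact hT
  exact le_iff.mp (by simpa [Algebra.algebraMap_eq_smul_one] using h.trans hc)

theorem posSemidef_sq_smul_one_sub_mul_conjTranspose_self
    (hT : ‖(toEuclideanCLM (𝕜 := ℂ) T : EuclideanSpace ℂ n →L[ℂ] EuclideanSpace ℂ n)‖ ≤ c) :
    (c ^ 2 • 1 - T * Tᴴ).PosSemidef := by
  have h : T * Tᴴ ≤ algebraMap ℝ _ (‖T‖ ^ 2) := CStarAlgebra.mul_star_le_algebraMap_norm_sq
  have hc : algebraMap ℝ (Matrix n n ℂ) (‖T‖ ^ 2) ≤ algebraMap ℝ _ (c ^ 2) := by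
    gcongr
    exact hT
  exact le_iff.mp (by simpa [Algebra.algebraMap_eq_smul_one] using h.trans hc)

end OperatorNorm

theorem re_trace_kronecker_one_mul_le {ι κ : Type*} [Fintype ι] [DecidableEq ι] [Fintype κ]
    [DecidableEq κ] {ρ : Matrix (ι × κ) (ι × κ) ℂ} (hρ : ρ.PosSemidef) (hρ₁ : ρ.trace = 1)
    {A : Matrix ι ι ℂ} {r : ℝ} (hA : (r • 1 - A).PosSemidef) :
    ((A ⊗ₖ (1 : Matrix κ κ ℂ)) * ρ).trace.re ≤ r := by
  have hkr : (r • 1 - A) ⊗ₖ (1 : Matrix κ κ ℂ) = r • 1 - A ⊗ₖ (1 : Matrix κ κ ℂ) :=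
    eq_sub_of_add_eq (by rw [← add_kronecker, sub_add_cancel, smul_kronecker, one_kronecker_one])
  have hQ := hkr ▸ hA.kronecker (PosSemidef.one (n := κ))
  have h := hQ.re_trace_mul_nonneg hρ
  rw [sub_mul, trace_sub, smul_mul_assoc, one_mul, trace_smul, hρ₁] at h
  simpa using h

/-- there is an absolute constant `K` such that for every state
`ρ` on `H ⊗ H'`, reflections `R` on `H` and `S` on `H'` with
`(1 + tr((R⊗S)ρ))/2 ≥ 1 − ε`, and every `T` on `H` with `‖T‖ ≤ c`:
`|tr(R T ρ) − tr((T⊗S)ρ)| ≤ K c √ε` and `|tr(T R ρ) − tr((T⊗S)ρ)| ≤ K c √ε`. -/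
theorem stmt_13 :
    ∃ K : ℝ, 0 < K ∧
      ∀ (n m : ℕ) (ρ : Matrix (Fin n × Fin m) (Fin n × Fin m) ℂ)
        (T R : Matrix (Fin n) (Fin n) ℂ) (S : Matrix (Fin m) (Fin m) ℂ) (c ε : ℝ),
        ρ.PosSemidef → ρ.trace = 1 →
        Rᴴ = R → R * R = 1 → Sᴴ = S → S * S = 1 →
        ‖(Matrix.toEuclideanCLM (𝕜 := ℂ) T :
            EuclideanSpace ℂ (Fin n) →L[ℂ] EuclideanSpace ℂ (Fin n))‖ ≤ c →
        0 ≤ ε →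
        (1 + (((R ⊗ₖ S) * ρ).trace).re) / 2 ≥ 1 - ε →
        ‖(((R * T) ⊗ₖ (1 : Matrix (Fin m) (Fin m) ℂ)) * ρ).trace
            - ((T ⊗ₖ S) * ρ).trace‖ ≤ K * c * Real.sqrt ε ∧
        ‖(((T * R) ⊗ₖ (1 : Matrix (Fin m) (Fin m) ℂ)) * ρ).trace
            - ((T ⊗ₖ S) * ρ).trace‖ ≤ K * c * Real.sqrt ε := by
  refine ⟨2, two_pos, fun n m ρ T R S c ε hρ hρ₁ hRH hR₂ hSH hS₂ hT _ hcons => ?_⟩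
  have hc : 0 ≤ c := (norm_nonneg _).trans hT
  have hPH : (R ⊗ₖ S)ᴴ = R ⊗ₖ S := by rw [conjTranspose_kronecker, hRH, hSH]
  have hP₂ : (R ⊗ₖ S) * (R ⊗ₖ S) = 1 := by
    rw [← mul_kronecker_mul, hR₂, hS₂, one_kronecker_one]
  have hP : √(2 - 2 * ((R ⊗ₖ S) * ρ).trace.re) ≤ 2 * √ε := by
    rw [show 2 * √ε = √(2 ^ 2 * ε) by simp]
    exact Real.sqrt_le_sqrt (by linarith)
  have hX : √((T ⊗ₖ S)ᴴ * (T ⊗ₖ S) * ρ).trace.re ≤ c := by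
    rw [conjTranspose_kronecker, hSH, ← mul_kronecker_mul, hS₂, Real.sqrt_le_left hc]
    exact re_trace_kronecker_one_mul_le hρ hρ₁
      (posSemidef_sq_smul_one_sub_conjTranspose_mul_self hT)
  have hX' : √((T ⊗ₖ S) * (T ⊗ₖ S)ᴴ * ρ).trace.re ≤ c := by
    rw [conjTranspose_kronecker, hSH, ← mul_kronecker_mul, hS₂, Real.sqrt_le_left hc]
    exact re_trace_kronecker_one_mul_le hρ hρ₁
      (posSemidef_sq_smul_one_sub_mul_conjTranspose_self hT)
  constructor
  · rw [← hS₂, mul_kronecker_mul]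
    refine (norm_trace_reflection_mul_sub_le hρ hρ₁ hPH hP₂ _).trans ?_
    exact (mul_le_mul hP hX (Real.sqrt_nonneg _) (by positivity)).trans_eq (by ring)
  · rw [← hS₂, mul_kronecker_mul]
    refine (norm_trace_mul_reflection_sub_le hρ hρ₁ hPH hP₂ _).trans ?_
    exact (mul_le_mul hX' hP (Real.sqrt_nonneg _) hc).trans_eq (by ring)
end

section
/- Jordan's lemma: for any two reflections R₀ and R₁ on a finite-dimensional Hilbert space H, there exists an orthogonal decomposition of H into subspaces each of dimension at most 2, each invariant under both R₀ and R₁. -/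
/-!
If `u` is an eigenvector of `R₀ R₁`, say `R₀ R₁ u = μ u`, then `span {u, R₁ u}` is invariant
under both involutions: `R₁` swaps the two spanning vectors, `R₀ R₁ u = μ u`, and
`R₀ u = μ⁻¹ R₁ u` (`μ ≠ 0` because `R₀ R₁` is invertible). Since both reflections are
self-adjoint, the orthogonal complement of this block inside a jointly invariant subspace is
again jointly invariant, so peeling off such blocks one at a time decomposes the whole space.
-/

open scoped InnerProductSpace
open Module Module.End Submodule

section Involution

variable {K V : Type*} [Field K] [AddCommGroup V] [Module K V] {R₀ R₁ : Module.End K V}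

theorem span_pair_apply_mem_invtSubmodule (hR₁ : R₁ ∘ₗ R₁ = LinearMap.id) (u : V) :
    span K {u, R₁ u} ∈ R₁.invtSubmodule := by
  rw [mem_invtSubmodule_iff_map_le, map_span_le]
  rintro v (rfl | rfl)
  · exact subset_span (by simp)
  · rw [← LinearMap.comp_apply, hR₁, LinearMap.id_apply]
    exact subset_span (by simp)

theorem span_pair_apply_mem_invtSubmodule_of_apply_apply_eq_smul
    (hR₀ : R₀ ∘ₗ R₀ = LinearMap.id) (hR₁ : R₁ ∘ₗ R₁ = LinearMap.id) {u : V} {μ : K}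
    (hu : R₀ (R₁ u) = μ • u) : span K {u, R₁ u} ∈ R₀.invtSubmodule := by
  have hR₁u : R₁ u = μ • R₀ u := by
    rw [← map_smul, ← hu, ← LinearMap.comp_apply R₀, hR₀, LinearMap.id_apply]
  obtain rfl | hμ := eq_or_ne μ 0
  · have hu0 : u = 0 := by
      rw [← LinearMap.id_apply (R := K) u, ← hR₁, LinearMap.comp_apply, hR₁u, zero_smul, map_zero]
    simp [hu0]
  rw [mem_invtSubmodule_iff_map_le, map_span_le]
  rintro v (rfl | rfl)
  · rw [show R₀ v = μ⁻¹ • R₁ v by rw [hR₁u, inv_smul_smul₀ hμ]]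
    exact smul_mem _ _ (subset_span (by simp))
  · rw [hu]
    exact smul_mem _ _ (subset_span (by simp))

theorem exists_le_ne_bot_finrank_le_two_mem_invtSubmodule [IsAlgClosed K] [FiniteDimensional K V]
    (hR₀ : R₀ ∘ₗ R₀ = LinearMap.id) (hR₁ : R₁ ∘ₗ R₁ = LinearMap.id) {P : Submodule K V}
    (hP₀ : P ∈ R₀.invtSubmodule) (hP₁ : P ∈ R₁.invtSubmodule) (hP : P ≠ ⊥) :
    ∃ W ≤ P, W ≠ ⊥ ∧ finrank K W ≤ 2 ∧ W ∈ R₀.invtSubmodule ∧ W ∈ R₁.invtSubmodule := by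
  have : Nontrivial P := nontrivial_iff_ne_bot.mpr hP
  obtain ⟨μ, hμ⟩ :=
    exists_eigenvalue ((R₀ ∘ₗ R₁).restrict (p := P) (q := P) fun _ hx ↦ hP₀ (hP₁ hx))
  obtain ⟨u, hu⟩ := hμ.exists_hasEigenvector
  have hu_eq : R₀ (R₁ u) = μ • (u : V) := congrArg Subtype.val hu.apply_eq_smul
  refine ⟨span K {(u : V), R₁ u}, span_le.mpr ?_, ?_, ?_,
    span_pair_apply_mem_invtSubmodule_of_apply_apply_eq_smul hR₀ hR₁ hu_eq,
    span_pair_apply_mem_invtSubmodule hR₁ u⟩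
  · rintro v (rfl | rfl)
    exacts [u.2, hP₁ u.2]
  · exact (Submodule.ne_bot_iff _).mpr ⟨u, subset_span (by simp), by simpa using hu.2⟩
  · classical
    refine (finrank_span_le_card _).trans ?_
    simpa only [Set.toFinset_insert, Set.toFinset_singleton] using Finset.card_le_two

end Involution

section Jordan

variable {H : Type*} [NormedAddCommGroup H] [InnerProductSpace ℂ H] [FiniteDimensional ℂ H]
  {R₀ R₁ : Module.End ℂ H}

theorem exists_orthogonal_decomposition_of_mem_invtSubmodule
    (hR₀sa : LinearMap.adjoint R₀ = R₀) (hR₀ : R₀ ∘ₗ R₀ = LinearMap.id)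
    (hR₁sa : LinearMap.adjoint R₁ = R₁) (hR₁ : R₁ ∘ₗ R₁ = LinearMap.id) (P : Submodule ℂ H)
    (hP₀ : P ∈ R₀.invtSubmodule) (hP₁ : P ∈ R₁.invtSubmodule) :
    ∃ s : Finset (Submodule ℂ H),
      (∀ W ∈ s, finrank ℂ W ≤ 2 ∧ W ∈ R₀.invtSubmodule ∧ W ∈ R₁.invtSubmodule) ∧
      (s : Set (Submodule ℂ H)).Pairwise IsOrtho ∧ s.sup id = P := by
  induction hd : finrank ℂ P using Nat.strong_induction_on generalizing P with
  | _ d ih =>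
  obtain rfl | hP := eq_or_ne P ⊥
  · exact ⟨∅, by simp, by simp, by simp⟩
  obtain ⟨W, hWP, hW, hW2, hW₀, hW₁⟩ :=
    exists_le_ne_bot_finrank_le_two_mem_invtSubmodule hR₀ hR₁ hP₀ hP₁ hP
  have hWperp₀ : Wᗮ ∈ R₀.invtSubmodule := mem_invtSubmodule_adjoint_iff.mp (by rwa [hR₀sa])
  have hWperp₁ : Wᗮ ∈ R₁.invtSubmodule := mem_invtSubmodule_adjoint_iff.mp (by rwa [hR₁sa])
  have hlt : Wᗮ ⊓ P < P := by
    refine inf_le_right.lt_of_ne fun h ↦ hW ?_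
    rw [← inf_eq_left.mpr ((hWP.trans (inf_eq_right.mp h))), inf_orthogonal_eq_bot]
  obtain ⟨s, hs, hs_ortho, hs_sup⟩ := ih _ (hd ▸ finrank_lt_finrank_of_lt hlt) (Wᗮ ⊓ P)
    (invtSubmodule.inf_mem hWperp₀ hP₀) (invtSubmodule.inf_mem hWperp₁ hP₁) rfl
  refine ⟨insert W s, ?_, ?_, ?_⟩
  · exact Finset.forall_mem_insert _ _ _ |>.mpr ⟨⟨hW2, hW₀, hW₁⟩, hs⟩
  · rw [Finset.coe_insert, Set.pairwise_insert_of_symm]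
    refine ⟨hs_ortho, fun U hU _ ↦ isOrtho_comm.mp (isOrtho_iff_le.mpr ?_)⟩
    exact (Finset.le_sup (f := id) hU).trans (hs_sup.le.trans inf_le_left)
  · rw [Finset.sup_insert, id, hs_sup, sup_orthogonal_inf_of_hasOrthogonalProjection hWP]

end Jordan

/-- Jordan's lemma: for any two reflections `R₀, R₁` on a
finite-dimensional Hilbert space, there is an orthogonal decomposition into
subspaces of dimension at most `2`, each invariant under both `R₀` and `R₁`. -/
theorem stmt_16 {n : ℕ}
    (R₀ R₁ : EuclideanSpace ℂ (Fin n) →ₗ[ℂ] EuclideanSpace ℂ (Fin n))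
    (hR₀sa : LinearMap.adjoint R₀ = R₀) (hR₀2 : R₀ ∘ₗ R₀ = LinearMap.id)
    (hR₁sa : LinearMap.adjoint R₁ = R₁) (hR₁2 : R₁ ∘ₗ R₁ = LinearMap.id) :
    ∃ (ι : Type) (_ : Fintype ι) (S : ι → Submodule ℂ (EuclideanSpace ℂ (Fin n))),
      (∀ i, Module.finrank ℂ (S i) ≤ 2) ∧
      (∀ i j, i ≠ j → ∀ x ∈ S i, ∀ y ∈ S j, ⟪x, y⟫_ℂ = 0) ∧
      (⨆ i, S i) = ⊤ ∧
      (∀ i, ∀ x ∈ S i, R₀ x ∈ S i ∧ R₁ x ∈ S i) := by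
  obtain ⟨s, hs, hs_ortho, hs_sup⟩ := exists_orthogonal_decomposition_of_mem_invtSubmodule
    hR₀sa hR₀2 hR₁sa hR₁2 ⊤ (invtSubmodule.top_mem _) (invtSubmodule.top_mem _)
  refine ⟨s, inferInstance, (↑), fun i ↦ (hs i i.2).1, fun i j hij ↦ ?_, ?_,
    fun i x hx ↦ ⟨(hs i i.2).2.1 hx, (hs i i.2).2.2 hx⟩⟩
  · exact isOrtho_iff_inner_eq.mp (hs_ortho i.2 j.2 (Subtype.val_injective.ne hij))
  · rw [← hs_sup, Finset.sup_id_eq_sSup, sSup_eq_iSup']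
    rfl
end

section
/- Expectation bound from Jordan form: let R₂, R₃ be reflections on H with R₃ = V†(Z ⊗ I)V and R₂ = V† (Σ_l [[C_l, S_l],[S_l, −C_l]] ⊗ |l⟩⟨l|) V for an isometry V: H → ℂ² ⊗ Ĥ, with C_l = cos θ_l, S_l = sin θ_l, θ_l ∈ [0,π]. Then for any reflection R on another system A and density operator ρ on A ⊗ H, 2 + (1/2)tr((R₂R₃+R₃R₂)ρ) − √2·tr(|R₂+R₃| ρ) = E_l[(sqrt(1+C_l) − 1)²], where E_l is expectation over Pr(l) = tr((I ⊗ |l⟩⟨l|) VρV†) and |·| denotes the operator absolute value. -/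
open Matrix
open scoped ComplexOrder Kronecker

noncomputable def PZ : Matrix (Fin 2) (Fin 2) ℂ := !![1, 0; 0, -1]

/-!
The hypotheses say `R₂ = Vᴴ M V` and `R₃ = Vᴴ N V` with `N = Z ⊗ 1` and
`M = jordanReflection θ = ⊕ₗ [[C_l, S_l], [S_l, -C_l]]`. Since `M` and `N` are reflections whose compressions by the isometry `V` are again reflections,
the range of `V` is invariant under both, i.e. `M V = V R₂` and `N V = V R₃`. On the `l`-th block,
`MN + NM = 2 C_l` and `(M + N)² = 2 + 2 C_l` are scalars. Hence `R₂R₃ + R₃R₂` is the compression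
of `2 C_l`, and, as the projection `V Vᴴ` commutes with the diagonal matrix `(M + N)²` and hence
with its square root, `|R₂ + R₃|` is the compression of `√(2 + 2 C_l)`. Both trace terms thus
become averages over `Pr(l)`, and `2 + C - √2 √(2 + 2C) = (√(1 + C) - 1)²` termwise.
-/

namespace Matrix

section Intertwining

variable {n k α : Type*} [Fintype n] [Fintype k] [Semiring α] {V : Matrix n k α}

theorem mul_mul_eq_of_mul_eq {X₁ X₂ : Matrix n n α} {Y₁ Y₂ : Matrix k k α}
    (h₁ : X₁ * V = V * Y₁) (h₂ : X₂ * V = V * Y₂) : X₁ * X₂ * V = V * (Y₁ * Y₂) := by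
  rw [Matrix.mul_assoc, h₂, ← Matrix.mul_assoc, h₁, Matrix.mul_assoc]

variable [StarRing α]

theorem conjTranspose_mul_mul_eq_of_mul_eq [DecidableEq k] (hV : Vᴴ * V = 1)
    {X : Matrix n n α} {Y : Matrix k k α} (h : X * V = V * Y) : Vᴴ * X * V = Y := by
  rw [Matrix.mul_assoc, h, ← Matrix.mul_assoc, hV, Matrix.one_mul]

theorem commute_mul_conjTranspose_of_mul_eq {X : Matrix n n α} {Y : Matrix k k α}
    (hX : Xᴴ = X) (hY : Yᴴ = Y) (h : X * V = V * Y) : Commute (V * Vᴴ) X := by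
  have hXP : X * (V * Vᴴ) = V * Y * Vᴴ := by rw [← Matrix.mul_assoc, h]
  calc V * Vᴴ * X = (X * (V * Vᴴ))ᴴ := by
        rw [conjTranspose_mul, conjTranspose_mul, conjTranspose_conjTranspose, hX]
    _ = X * (V * Vᴴ) := by
        rw [hXP, conjTranspose_mul, conjTranspose_mul, conjTranspose_conjTranspose, hY,
          Matrix.mul_assoc]

theorem mul_eq_mul_of_commute_mul_conjTranspose [DecidableEq k] (hV : Vᴴ * V = 1)
    {X : Matrix n n α} (h : Commute (V * Vᴴ) X) : X * V = V * (Vᴴ * X * V) := by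
  calc X * V = X * (V * Vᴴ) * V := by
        rw [Matrix.mul_assoc X, Matrix.mul_assoc, hV, Matrix.mul_one]
    _ = V * (Vᴴ * X * V) := by rw [← h.eq]; simp only [Matrix.mul_assoc]

end Intertwining

theorem commute_diagonal_comp {n R : Type*} [DecidableEq n] [Fintype n] [CommRing R]
    [NoZeroDivisors R] {P : Matrix n n R} {d : n → R} (h : Commute P (diagonal d))
    (f : R → R) : Commute P (diagonal (f ∘ d)) := by
  ext i j
  have hij := congr_fun₂ h.eq i j
  simp only [mul_diagonal, diagonal_mul, Function.comp_apply] at hij ⊢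
  by_cases hP : P i j = 0
  · simp [hP]
  · rw [mul_comm (d i)] at hij
    rw [mul_left_cancel₀ hP hij, mul_comm]

section RCLike

variable {n k 𝕜 : Type*} [Fintype n] [DecidableEq n] [Fintype k] [DecidableEq k] [RCLike 𝕜]
  {V : Matrix n k 𝕜}

theorem PosSemidef.eq_of_mul_self_eq {A B : Matrix k k 𝕜} (hA : A.PosSemidef)
    (hB : B.PosSemidef) (h : A * A = B * B) : A = B := by
  open scoped MatrixOrder in
  rw [← CFC.sqrt_mul_self A hA.nonneg, ← CFC.sqrt_mul_self B hB.nonneg, h]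

theorem mul_eq_mul_conjTranspose_mul_mul_of_mul_self_eq_one (hV : Vᴴ * V = 1)
    {W : Matrix n n 𝕜} (hW : Wᴴ = W) (hW2 : W * W = 1)
    (hY : Vᴴ * W * V * (Vᴴ * W * V) = 1) : W * V = V * (Vᴴ * W * V) := by
  have hYH : (Vᴴ * W * V)ᴴ = Vᴴ * W * V := by
    simp only [conjTranspose_mul, conjTranspose_conjTranspose, hW, Matrix.mul_assoc]
  rw [← sub_eq_zero, ← conjTranspose_mul_self_eq_zero]
  calc (W * V - V * (Vᴴ * W * V))ᴴ * (W * V - V * (Vᴴ * W * V))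
      = (Vᴴ * W - Vᴴ * W * V * Vᴴ) * (W * V - V * (Vᴴ * W * V)) := by
        rw [conjTranspose_sub, conjTranspose_mul, conjTranspose_mul, hW, hYH]
    _ = Vᴴ * (W * W) * V - Vᴴ * W * V * (Vᴴ * W * V) - Vᴴ * W * V * (Vᴴ * W * V)
          + Vᴴ * W * V * (Vᴴ * V) * (Vᴴ * W * V) := by
        simp only [Matrix.sub_mul, Matrix.mul_sub, Matrix.mul_assoc]
        abel
    _ = 0 := by rw [hW2, Matrix.mul_one, hV, Matrix.mul_one, hY]; abel

theorem eq_conjTranspose_mul_diagonal_sqrt_mul (hV : Vᴴ * V = 1) {T : Matrix n n 𝕜}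
    {Y : Matrix k k 𝕜} (hT : Tᴴ = T) (hTV : T * V = V * Y) {d : n → ℝ} (hd : ∀ i, 0 ≤ d i)
    (hT2 : T * T = diagonal fun i => (d i : 𝕜)) {A : Matrix k k 𝕜} (hA : A.PosSemidef)
    (hA2 : A * A = Y * Y) : A = Vᴴ * diagonal (fun i => (√(d i) : 𝕜)) * V := by
  set S : Matrix n n 𝕜 := diagonal fun i => (√(d i) : 𝕜)
  have hY : Yᴴ = Y := by
    rw [← conjTranspose_mul_mul_eq_of_mul_eq hV hTV]
    simp only [conjTranspose_mul, conjTranspose_conjTranspose, hT, Matrix.mul_assoc]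
  have hPS : Commute (V * Vᴴ) S := by
    have hPT := commute_mul_conjTranspose_of_mul_eq hT hY hTV
    have hPT2 := hPT.mul_right hPT
    rw [hT2] at hPT2
    simpa [S, Function.comp_def] using commute_diagonal_comp hPT2 fun z => (√(RCLike.re z) : 𝕜)
  have hSV := mul_eq_mul_of_commute_mul_conjTranspose hV hPS
  have hSS : S * S = T * T := by
    rw [hT2, diagonal_mul_diagonal]
    congr 1
    ext i
    rw [← RCLike.ofReal_mul, Real.mul_self_sqrt (hd i)]
  have hQ : (Vᴴ * S * V).PosSemidef :=
    (posSemidef_diagonal_iff.2 fun i => RCLike.ofReal_nonneg.2 (Real.sqrt_nonneg _)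
      ).conjTranspose_mul_mul_same V
  refine hA.eq_of_mul_self_eq hQ ?_
  rw [hA2, ← conjTranspose_mul_mul_eq_of_mul_eq hV (mul_mul_eq_of_mul_eq hTV hTV),
    ← conjTranspose_mul_mul_eq_of_mul_eq hV (mul_mul_eq_of_mul_eq hSV hSV), hSS]

end RCLike

theorem sum_kronecker_single_eq_blockDiagonal {ι m n α : Type*} [Fintype ι] [DecidableEq ι]
    [Semiring α] (F : ι → Matrix m n α) :
    ∑ l, F l ⊗ₖ single l l (1 : α) = blockDiagonal F := by
  ext ⟨i, l⟩ ⟨j, l'⟩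
  simp [Matrix.sum_apply, blockDiagonal_apply, single_apply, ite_and, Finset.sum_ite_eq']

section Trace

variable {a ι α : Type*} [Fintype a] [DecidableEq a] [CommRing α]

theorem trace_one_kronecker_conjTranspose_mul_mul {n k : Type*} [Fintype n] [Fintype k]
    [StarRing α] (ρ : Matrix (a × k) (a × k) α) (V : Matrix n k α) (X : Matrix n n α) :
    ((1 : Matrix a a α) ⊗ₖ (Vᴴ * X * V) * ρ).trace =
      (((1 : Matrix a a α) ⊗ₖ X) *
        (((1 : Matrix a a α) ⊗ₖ V) * ρ * ((1 : Matrix a a α) ⊗ₖ V)ᴴ)).trace := by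
  rw [conjTranspose_kronecker, conjTranspose_one, ← Matrix.one_mul (1 : Matrix a a α),
    mul_kronecker_mul, ← Matrix.one_mul (1 : Matrix a a α), mul_kronecker_mul]
  simp only [Matrix.mul_assoc]
  rw [trace_mul_comm]
  simp only [Matrix.mul_assoc, Matrix.one_mul]

theorem trace_one_kronecker_diagonal_snd_mul {m : Type*} [Fintype m] [DecidableEq m]
    [Fintype ι] [DecidableEq ι] (σ : Matrix (a × (m × ι)) (a × (m × ι)) α) (f : ι → α) :
    ((1 : Matrix a a α) ⊗ₖ diagonal (fun x : m × ι => f x.2) * σ).trace =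
      ∑ l, f l * ((1 ⊗ₖ ((1 : Matrix m m α) ⊗ₖ single l l 1)) * σ).trace := by
  have hdiag : (1 : Matrix a a α) ⊗ₖ diagonal (fun x : m × ι => f x.2) =
      ∑ l, f l • (1 ⊗ₖ ((1 : Matrix m m α) ⊗ₖ single l l 1)) := by
    ext ⟨i, j, l⟩ ⟨i', j', l'⟩
    simp [Matrix.sum_apply, diagonal_apply, single_apply, one_apply, ite_and, Finset.sum_ite_eq']
    split_ifs <;> simp_all
  simp [hdiag, Matrix.sum_mul, trace_sum]

theorem sum_trace_one_kronecker_single_mul {m k : Type*} [Fintype m] [DecidableEq m] [Fintype ι]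
    [DecidableEq ι] [Fintype k] [DecidableEq k] [StarRing α] (ρ : Matrix (a × k) (a × k) α)
    {V : Matrix (m × ι) k α} (hV : Vᴴ * V = 1) :
    ∑ l, ((1 ⊗ₖ ((1 : Matrix m m α) ⊗ₖ single l l 1)) *
      (((1 : Matrix a a α) ⊗ₖ V) * ρ * ((1 : Matrix a a α) ⊗ₖ V)ᴴ)).trace = ρ.trace := by
  have h := trace_one_kronecker_diagonal_snd_mul
    (((1 : Matrix a a α) ⊗ₖ V) * ρ * ((1 : Matrix a a α) ⊗ₖ V)ᴴ) fun _ => (1 : α)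
  rw [← trace_one_kronecker_conjTranspose_mul_mul] at h
  simpa [hV] using h.symm

end Trace

end Matrix

theorem PZ_conjTranspose : PZᴴ = PZ := by
  ext i j
  fin_cases i <;> fin_cases j <;> simp [PZ]

theorem PZ_mul_self : PZ * PZ = 1 := by
  ext i j
  fin_cases i <;> fin_cases j <;> simp [PZ, Matrix.mul_apply, Fin.sum_univ_two]

noncomputable def reflectionBlock (θ : ℝ) : Matrix (Fin 2) (Fin 2) ℂ :=
  !![(Real.cos θ : ℂ), (Real.sin θ : ℂ); (Real.sin θ : ℂ), -(Real.cos θ : ℂ)]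

section reflectionBlock

variable (θ : ℝ)

theorem reflectionBlock_conjTranspose : (reflectionBlock θ)ᴴ = reflectionBlock θ := by
  ext i j
  fin_cases i <;> fin_cases j <;>
    simp [reflectionBlock, -Complex.ofReal_cos, -Complex.ofReal_sin, Complex.conj_ofReal]

theorem reflectionBlock_mul_self : reflectionBlock θ * reflectionBlock θ = 1 := by
  ext i j
  fin_cases i <;> fin_cases j <;> simp [reflectionBlock, Matrix.mul_apply] <;>
    first | linear_combination Complex.cos_sq_add_sin_sq (θ : ℂ) | ring

theorem reflectionBlock_add_PZ_mul_self :
    (reflectionBlock θ + PZ) * (reflectionBlock θ + PZ) =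
      diagonal fun _ => ((2 + 2 * Real.cos θ : ℝ) : ℂ) := by
  ext i j
  fin_cases i <;> fin_cases j <;> simp [reflectionBlock, PZ, Matrix.mul_apply] <;>
    first | linear_combination Complex.cos_sq_add_sin_sq (θ : ℂ) | ring

theorem reflectionBlock_mul_PZ_add_PZ_mul :
    reflectionBlock θ * PZ + PZ * reflectionBlock θ =
      diagonal fun _ => ((2 * Real.cos θ : ℝ) : ℂ) := by
  ext i j
  fin_cases i <;> fin_cases j <;> simp [reflectionBlock, PZ] <;> ring

end reflectionBlock

theorem two_add_sub_sqrt_two_mul_sqrt_two_add_two_mul {c : ℝ} (hc : -1 ≤ c) :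
    2 + c - √2 * √(2 + 2 * c) = (√(1 + c) - 1) ^ 2 := by
  have h2 : √2 * √(2 + 2 * c) = 2 * √(1 + c) := by
    rw [← Real.sqrt_mul zero_le_two, show 2 * (2 + 2 * c) = 2 ^ 2 * (1 + c) by ring,
      Real.sqrt_mul (by positivity), Real.sqrt_sq zero_le_two]
  rw [h2, sub_sq, Real.sq_sqrt (by linarith)]
  ring

theorem two_add_sum_sub_sqrt_two_mul_sum {ι : Type*} [Fintype ι] {p c : ι → ℝ}
    (hp : ∑ l, p l = 1) (hc : ∀ l, -1 ≤ c l) :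
    2 + 1 / 2 * ∑ l, 2 * c l * p l - √2 * ∑ l, √(2 + 2 * c l) * p l =
      ∑ l, p l * (√(1 + c l) - 1) ^ 2 := by
  have hterm : ∀ l, p l * (√(1 + c l) - 1) ^ 2 =
      2 * p l + 1 / 2 * (2 * c l * p l) - √2 * (√(2 + 2 * c l) * p l) := fun l => by
    rw [← two_add_sub_sqrt_two_mul_sqrt_two_add_two_mul (hc l)]
    ring
  rw [Finset.sum_congr rfl fun l _ => hterm l, Finset.sum_sub_distrib, Finset.sum_add_distrib,
    ← Finset.mul_sum, ← Finset.mul_sum, ← Finset.mul_sum, hp, mul_one]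

section JordanForm

variable {ι : Type*} [DecidableEq ι] (θ : ι → ℝ)

noncomputable def jordanReflection : Matrix (Fin 2 × ι) (Fin 2 × ι) ℂ :=
  blockDiagonal fun l => reflectionBlock (θ l)

theorem jordanReflection_conjTranspose : (jordanReflection θ)ᴴ = jordanReflection θ := by
  simp [jordanReflection, reflectionBlock_conjTranspose]

theorem PZ_kronecker_one_conjTranspose : (PZ ⊗ₖ (1 : Matrix ι ι ℂ))ᴴ = PZ ⊗ₖ 1 := by
  rw [conjTranspose_kronecker, PZ_conjTranspose, conjTranspose_one]

variable [Fintype ι]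

theorem jordanReflection_mul_self : jordanReflection θ * jordanReflection θ = 1 := by
  rw [jordanReflection, ← blockDiagonal_mul]
  simp_rw [reflectionBlock_mul_self]
  exact blockDiagonal_one

theorem PZ_kronecker_one_mul_self : (PZ ⊗ₖ (1 : Matrix ι ι ℂ)) * (PZ ⊗ₖ 1) = 1 := by
  rw [← mul_kronecker_mul, PZ_mul_self, Matrix.one_mul, one_kronecker_one]

theorem jordanReflection_add_PZ_kronecker_one_mul_self :
    (jordanReflection θ + PZ ⊗ₖ 1) * (jordanReflection θ + PZ ⊗ₖ 1) =
      diagonal fun x => ((2 + 2 * Real.cos (θ x.2) : ℝ) : ℂ) := by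
  simp only [jordanReflection, kronecker_one, ← blockDiagonal_add, ← blockDiagonal_mul,
    Pi.add_apply, reflectionBlock_add_PZ_mul_self, blockDiagonal_diagonal]

theorem jordanReflection_mul_PZ_kronecker_one_add :
    jordanReflection θ * (PZ ⊗ₖ 1) + (PZ ⊗ₖ 1) * jordanReflection θ =
      diagonal fun x => ((2 * Real.cos (θ x.2) : ℝ) : ℂ) := by
  simp only [jordanReflection, kronecker_one, ← blockDiagonal_mul, ← blockDiagonal_add,
    Pi.add_def, reflectionBlock_mul_PZ_add_PZ_mul, blockDiagonal_diagonal]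

variable {θ} {k : Type*} [Fintype k] [DecidableEq k] {V : Matrix (Fin 2 × ι) k ℂ}
  {R₂ R₃ : Matrix k k ℂ}

theorem jordanReflection_mul_eq_mul (hV : Vᴴ * V = 1) (hR₂ : R₂ = Vᴴ * jordanReflection θ * V)
    (hR₂sq : R₂ * R₂ = 1) : jordanReflection θ * V = V * R₂ := by
  subst hR₂
  exact mul_eq_mul_conjTranspose_mul_mul_of_mul_self_eq_one hV
    (jordanReflection_conjTranspose θ) (jordanReflection_mul_self θ) hR₂sq

theorem PZ_kronecker_one_mul_eq_mul (hV : Vᴴ * V = 1)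
    (hR₃ : R₃ = Vᴴ * (PZ ⊗ₖ (1 : Matrix ι ι ℂ)) * V) (hR₃sq : R₃ * R₃ = 1) :
    (PZ ⊗ₖ (1 : Matrix ι ι ℂ)) * V = V * R₃ := by
  subst hR₃
  exact mul_eq_mul_conjTranspose_mul_mul_of_mul_self_eq_one hV
    PZ_kronecker_one_conjTranspose PZ_kronecker_one_mul_self hR₃sq

theorem anticommutator_eq_of_jordanReflection (hV : Vᴴ * V = 1)
    (hR₂ : R₂ = Vᴴ * jordanReflection θ * V) (hR₃ : R₃ = Vᴴ * (PZ ⊗ₖ (1 : Matrix ι ι ℂ)) * V)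
    (hR₂sq : R₂ * R₂ = 1) (hR₃sq : R₃ * R₃ = 1) :
    R₂ * R₃ + R₃ * R₂ =
      Vᴴ * diagonal (fun x : Fin 2 × ι => ((2 * Real.cos (θ x.2) : ℝ) : ℂ)) * V := by
  have hMV := jordanReflection_mul_eq_mul hV hR₂ hR₂sq
  have hNV := PZ_kronecker_one_mul_eq_mul hV hR₃ hR₃sq
  have hTV : (jordanReflection θ * (PZ ⊗ₖ 1) + (PZ ⊗ₖ 1) * jordanReflection θ) * V =
      V * (R₂ * R₃ + R₃ * R₂) := by
    rw [Matrix.add_mul, mul_mul_eq_of_mul_eq hMV hNV, mul_mul_eq_of_mul_eq hNV hMV,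
      Matrix.mul_add]
  rw [← conjTranspose_mul_mul_eq_of_mul_eq hV hTV, jordanReflection_mul_PZ_kronecker_one_add]

theorem posSemidef_sqrt_eq_of_jordanReflection (hV : Vᴴ * V = 1)
    (hR₂ : R₂ = Vᴴ * jordanReflection θ * V) (hR₃ : R₃ = Vᴴ * (PZ ⊗ₖ (1 : Matrix ι ι ℂ)) * V)
    (hR₂sq : R₂ * R₂ = 1) (hR₃sq : R₃ * R₃ = 1) {A : Matrix k k ℂ} (hA : A.PosSemidef)
    (hA2 : A * A = (R₂ + R₃) * (R₂ + R₃)) :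
    A = Vᴴ * diagonal (fun x : Fin 2 × ι => ((√(2 + 2 * Real.cos (θ x.2)) : ℝ) : ℂ)) * V := by
  refine eq_conjTranspose_mul_diagonal_sqrt_mul (d := fun x => 2 + 2 * Real.cos (θ x.2)) hV
    ?_ ?_ (fun x => ?_) (jordanReflection_add_PZ_kronecker_one_mul_self θ) hA hA2
  · rw [conjTranspose_add, jordanReflection_conjTranspose, PZ_kronecker_one_conjTranspose]
  · rw [Matrix.add_mul, jordanReflection_mul_eq_mul hV hR₂ hR₂sq,
      PZ_kronecker_one_mul_eq_mul hV hR₃ hR₃sq, Matrix.mul_add]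
  · linarith [Real.neg_one_le_cos (θ x.2)]

end JordanForm

theorem stmt_18_general {nA k m : ℕ}
    (ρ : Matrix (Fin nA × Fin k) (Fin nA × Fin k) ℂ)
    (hρtr : ρ.trace = 1)
    (V : Matrix (Fin 2 × Fin m) (Fin k) ℂ) (hV : Vᴴ * V = 1)
    (θ : Fin m → ℝ)
    (R₂ R₃ : Matrix (Fin k) (Fin k) ℂ)
    (hR₃ : R₃ = Vᴴ * (PZ ⊗ₖ (1 : Matrix (Fin m) (Fin m) ℂ)) * V)
    (hR₂ : R₂ = Vᴴ * (∑ l : Fin m,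
        (!![(Real.cos (θ l) : ℂ), (Real.sin (θ l) : ℂ);
            (Real.sin (θ l) : ℂ), -(Real.cos (θ l) : ℂ)]
          ⊗ₖ Matrix.single l l (1 : ℂ))) * V)
    (hR₂refl : R₂ᴴ = R₂ ∧ R₂ * R₂ = 1) (hR₃refl : R₃ᴴ = R₃ ∧ R₃ * R₃ = 1)
    -- `Ab` is the operator absolute value `|R₂ + R₃|`
    (Ab : Matrix (Fin k) (Fin k) ℂ)
    (hAb : Ab.PosSemidef) (hAb2 : Ab * Ab = (R₂ + R₃) * (R₂ + R₃)) :
    2 + (1 / 2 : ℝ) * (((1 : Matrix (Fin nA) (Fin nA) ℂ) ⊗ₖ (R₂ * R₃ + R₃ * R₂)) * ρ).trace.re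
      - Real.sqrt 2 * (((1 : Matrix (Fin nA) (Fin nA) ℂ) ⊗ₖ Ab) * ρ).trace.re =
    ∑ l : Fin m,
      ((((1 : Matrix (Fin nA) (Fin nA) ℂ) ⊗ₖ
          ((1 : Matrix (Fin 2) (Fin 2) ℂ) ⊗ₖ Matrix.single l l (1 : ℂ)))
        * (((1 : Matrix (Fin nA) (Fin nA) ℂ) ⊗ₖ V) * ρ
            * ((1 : Matrix (Fin nA) (Fin nA) ℂ) ⊗ₖ V)ᴴ)).trace.re)
      * (Real.sqrt (1 + Real.cos (θ l)) - 1) ^ 2 := by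
  obtain ⟨-, hR₂sq⟩ := hR₂refl
  obtain ⟨-, hR₃sq⟩ := hR₃refl
  have hR₂J : R₂ = Vᴴ * jordanReflection θ * V := by
    rw [hR₂, sum_kronecker_single_eq_blockDiagonal]
    rfl
  have hprob := sum_trace_one_kronecker_single_mul ρ hV
  rw [anticommutator_eq_of_jordanReflection hV hR₂J hR₃ hR₂sq hR₃sq,
    posSemidef_sqrt_eq_of_jordanReflection hV hR₂J hR₃ hR₂sq hR₃sq hAb hAb2,
    trace_one_kronecker_conjTranspose_mul_mul, trace_one_kronecker_conjTranspose_mul_mul,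
    trace_one_kronecker_diagonal_snd_mul _ fun l => ((2 * Real.cos (θ l) : ℝ) : ℂ),
    trace_one_kronecker_diagonal_snd_mul _ fun l => ((√(2 + 2 * Real.cos (θ l)) : ℝ) : ℂ),
    Complex.re_sum, Complex.re_sum]
  simp only [Complex.re_ofReal_mul]
  refine two_add_sum_sub_sqrt_two_mul_sum ?_ fun l => Real.neg_one_le_cos (θ l)
  rw [← Complex.re_sum, hprob, hρtr, Complex.one_re]

/-- expectation bound from Jordan form: with
`R₃ = Vᴴ(Z ⊗ I)V` and `R₂ = Vᴴ(Σ_l [[C_l,S_l],[S_l,−C_l]] ⊗ |l⟩⟨l|)V` for an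
isometry `V : H → ℂ² ⊗ Ĥ`, any reflection `R` on `A`, and any density operator
`ρ` on `A ⊗ H`,
`2 + (1/2) tr((R₂R₃+R₃R₂)ρ) − √2 tr(|R₂+R₃| ρ) = E_l[(√(1+C_l) − 1)²]`,
where `Pr(l) = tr((I ⊗ |l⟩⟨l|) V ρ V†)`. -/
theorem stmt_18 {nA k m : ℕ}
    (ρ : Matrix (Fin nA × Fin k) (Fin nA × Fin k) ℂ)
    (hρ : ρ.PosSemidef) (hρtr : ρ.trace = 1)
    (R : Matrix (Fin nA) (Fin nA) ℂ) (hR : Rᴴ = R) (hR2 : R * R = 1)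
    (V : Matrix (Fin 2 × Fin m) (Fin k) ℂ) (hV : Vᴴ * V = 1)
    (θ : Fin m → ℝ) (hθ : ∀ l, θ l ∈ Set.Icc 0 Real.pi)
    (R₂ R₃ : Matrix (Fin k) (Fin k) ℂ)
    (hR₃ : R₃ = Vᴴ * (PZ ⊗ₖ (1 : Matrix (Fin m) (Fin m) ℂ)) * V)
    (hR₂ : R₂ = Vᴴ * (∑ l : Fin m,
        (!![(Real.cos (θ l) : ℂ), (Real.sin (θ l) : ℂ);
            (Real.sin (θ l) : ℂ), -(Real.cos (θ l) : ℂ)]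
          ⊗ₖ Matrix.single l l (1 : ℂ))) * V)
    (hR₂refl : R₂ᴴ = R₂ ∧ R₂ * R₂ = 1) (hR₃refl : R₃ᴴ = R₃ ∧ R₃ * R₃ = 1)
    -- `Ab` is the operator absolute value `|R₂ + R₃|`
    (Ab : Matrix (Fin k) (Fin k) ℂ)
    (hAb : Ab.PosSemidef) (hAb2 : Ab * Ab = (R₂ + R₃) * (R₂ + R₃)) :
    2 + (1 / 2 : ℝ) * (((1 : Matrix (Fin nA) (Fin nA) ℂ) ⊗ₖ (R₂ * R₃ + R₃ * R₂)) * ρ).trace.re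
      - Real.sqrt 2 * (((1 : Matrix (Fin nA) (Fin nA) ℂ) ⊗ₖ Ab) * ρ).trace.re =
    ∑ l : Fin m,
      ((((1 : Matrix (Fin nA) (Fin nA) ℂ) ⊗ₖ
          ((1 : Matrix (Fin 2) (Fin 2) ℂ) ⊗ₖ Matrix.single l l (1 : ℂ)))
        * (((1 : Matrix (Fin nA) (Fin nA) ℂ) ⊗ₖ V) * ρ
            * ((1 : Matrix (Fin nA) (Fin nA) ℂ) ⊗ₖ V)ᴴ)).trace.re)
      * (Real.sqrt (1 + Real.cos (θ l)) - 1) ^ 2 :=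
  stmt_18_general ρ hρtr V hV θ R₂ R₃ hR₃ hR₂ hR₂refl hR₃refl Ab hAb hAb2
end

section
/- Twirling identity: let V ∈ Lin(H, ℂ²⊗Ĥ) be an isometry, R an operator on H, |Φ⟩ = (|00⟩+|11⟩)/√2 the EPR state on ℂ²⊗ℂ², and define the isometry C = (I ⊗ V†)·SWAP·(|Φ⟩ ⊗ V), where SWAP exchanges the first qubit of |Φ⟩ with the qubit output of V. Then C†(I ⊗ I ⊗ R)C = (1/4) Σ_{j=0}^{3} (V†(σ_j ⊗ I)V) R (V†(σ_j ⊗ I)V), where σ₀ = I, σ₁ = X, σ₂ = Y, σ₃ = Z are the Pauli matrices. -/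
set_option synthInstance.maxHeartbeats 1000000
set_option maxHeartbeats 4000000


open Matrix
open scoped Kronecker

/-- The Pauli matrices `σ₀ = I, σ₁ = X, σ₂ = Y, σ₃ = Z`. -/
noncomputable def pauli : Fin 4 → Matrix (Fin 2) (Fin 2) ℂ
  | 0 => 1
  | 1 => !![0, 1; 1, 0]
  | 2 => !![0, -Complex.I; Complex.I, 0]
  | 3 => !![1, 0; 0, -1]

/-- `Nmat V a b = Vᴴ (E_{ab} ⊗ 1) V`, entrywise. -/
noncomputable def Nmat {n m : ℕ} (V : Matrix (Fin 2 × Fin m) (Fin n) ℂ) (a b : Fin 2) :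
    Matrix (Fin n) (Fin n) ℂ :=
  Matrix.of fun x i => ∑ f, (starRingEnd ℂ) (V (a, f) x) * V (b, f) i

lemma Nmat_conjTranspose {n m : ℕ} (V : Matrix (Fin 2 × Fin m) (Fin n) ℂ) (a b : Fin 2) :
    (Nmat V a b)ᴴ = Nmat V b a := by
  ext x i
  simp [Nmat, conjTranspose_apply, mul_comm]

lemma hM {n m : ℕ} (V : Matrix (Fin 2 × Fin m) (Fin n) ℂ) (A : Matrix (Fin 2) (Fin 2) ℂ) :
    Vᴴ * (A ⊗ₖ (1 : Matrix (Fin m) (Fin m) ℂ)) * V = ∑ a, ∑ b, A a b • Nmat V a b := by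
  ext x i
  simp [mul_apply, Fintype.sum_prod_type, Matrix.one_apply, conjTranspose_apply, Nmat,
    Finset.mul_sum, Fin.sum_univ_two, Finset.sum_ite_eq, Finset.sum_ite_eq',
    Finset.sum_add_distrib, add_mul, mul_add, mul_comm, mul_left_comm, mul_assoc]

lemma blocks {α : Type*} [Fintype α] [DecidableEq α] {n : ℕ}
    (C : Matrix (α × Fin n) (Fin n) ℂ) (R : Matrix (Fin n) (Fin n) ℂ)
    (M : α → Matrix (Fin n) (Fin n) ℂ) (h : ∀ s i x, C (s, i) x = M s i x) :
    Cᴴ * ((1 : Matrix α α ℂ) ⊗ₖ R) * C = ∑ s, (M s)ᴴ * R * (M s) := by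
  ext x y
  simp only [mul_apply, conjTranspose_apply, kroneckerMap_apply, Matrix.one_apply,
    Fintype.sum_prod_type, Finset.sum_apply, h, ite_mul, one_mul, zero_mul,
    Finset.sum_ite_eq, Finset.sum_ite_eq', Finset.mul_sum, Finset.sum_mul, mul_ite, mul_zero,
    mul_one, Finset.mem_univ, if_true]
  simp only [Finset.sum_ite_irrel, Finset.sum_const_zero, Finset.sum_ite_eq,
    Finset.sum_ite_eq', Finset.mem_univ, if_true, Matrix.sum_apply]
  apply Finset.sum_congr rfl
  intro s _
  simp only [mul_apply, conjTranspose_apply, Finset.sum_mul]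

/-- twirling identity: with `C = (I ⊗ V†)·SWAP·(|Φ⟩ ⊗ V)`,
`C†(I ⊗ I ⊗ R)C = (1/4) Σ_j (V†(σ_j⊗I)V) R (V†(σ_j⊗I)V)`. -/
theorem stmt_19 {n m : ℕ}
    (V : Matrix (Fin 2 × Fin m) (Fin n) ℂ) (hV : Vᴴ * V = 1)
    (R : Matrix (Fin n) (Fin n) ℂ)
    -- `ΦV = |Φ⟩ ⊗ V` with `|Φ⟩ = (|00⟩+|11⟩)/√2` on `B₁ ⊗ B₁'`
    (ΦV : Matrix ((Fin 2 × Fin 2) × (Fin 2 × Fin m)) (Fin n) ℂ)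
    (hΦV : ∀ p x, ΦV p x =
      (if p.1.1 = p.1.2 then ((Real.sqrt 2 : ℂ))⁻¹ else 0) * V p.2 x)
    -- `S13` swaps the first qubit `B₁` with the qubit output of `V`
    (S13 : Matrix ((Fin 2 × Fin 2) × (Fin 2 × Fin m)) ((Fin 2 × Fin 2) × (Fin 2 × Fin m)) ℂ)
    (hS13 : ∀ p q, S13 p q =
      if p.1.1 = q.2.1 ∧ p.1.2 = q.1.2 ∧ p.2.1 = q.1.1 ∧ p.2.2 = q.2.2 then 1 else 0)
    (C : Matrix ((Fin 2 × Fin 2) × Fin n) (Fin n) ℂ)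
    (hC : C = ((1 : Matrix (Fin 2 × Fin 2) (Fin 2 × Fin 2) ℂ) ⊗ₖ Vᴴ) * S13 * ΦV) :
    Cᴴ * ((1 : Matrix (Fin 2 × Fin 2) (Fin 2 × Fin 2) ℂ) ⊗ₖ R) * C =
      (4 : ℂ)⁻¹ • ∑ j : Fin 4,
        (Vᴴ * (pauli j ⊗ₖ (1 : Matrix (Fin m) (Fin m) ℂ)) * V) * R *
        (Vᴴ * (pauli j ⊗ₖ (1 : Matrix (Fin m) (Fin m) ℂ)) * V) := by
  have hCe : ∀ s : Fin 2 × Fin 2, ∀ i x, C (s, i) x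
      = (((Real.sqrt 2 : ℂ))⁻¹ • Nmat V s.2 s.1) i x := by
    subst hC
    rintro ⟨a, b⟩ i x
    simp [mul_apply, hS13, hΦV, Matrix.one_apply, Fintype.sum_prod_type, conjTranspose_apply,
      Nmat, Finset.mul_sum, Finset.sum_mul, mul_comm, mul_assoc, mul_left_comm]
    fin_cases a <;> fin_cases b <;>
      simp [Finset.sum_ite_eq, Finset.sum_ite_eq']
  rw [blocks C R _ hCe]
  have h2 : ((Real.sqrt 2 : ℂ))⁻¹ * ((Real.sqrt 2 : ℂ))⁻¹ = (2 : ℂ)⁻¹ := by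
    rw [← mul_inv]
    norm_num [← Complex.ofReal_mul, Real.mul_self_sqrt]
  have h2' : star ((Real.sqrt 2 : ℂ))⁻¹ = ((Real.sqrt 2 : ℂ))⁻¹ := by
    simp [← Complex.ofReal_inv]
  have hhalf : ∀ s : Fin 2 × Fin 2,
      (((Real.sqrt 2 : ℂ))⁻¹ • Nmat V s.2 s.1)ᴴ * R * (((Real.sqrt 2 : ℂ))⁻¹ • Nmat V s.2 s.1)
        = (2 : ℂ)⁻¹ • (Nmat V s.1 s.2 * R * Nmat V s.2 s.1) := by
    intro s
    rw [conjTranspose_smul, Nmat_conjTranspose, Matrix.smul_mul, Matrix.smul_mul,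
      Matrix.mul_smul, smul_smul, h2', h2]
  simp only [hhalf, hM]
  simp only [Fintype.sum_prod_type, Fin.sum_univ_two, Fin.sum_univ_four, pauli,
    Matrix.one_apply, Matrix.smul_mul, Matrix.mul_smul, Matrix.add_mul, Matrix.mul_add,
    smul_smul, smul_add, Matrix.of_apply, Matrix.cons_val',
    Matrix.cons_val_zero, Matrix.cons_val_one,
    Matrix.head_cons, Matrix.head_fin_const, Matrix.empty_val', Matrix.cons_val_fin_one,
    if_true, if_false, Fin.zero_eq_one_iff, Fin.one_eq_zero_iff, one_smul, zero_smul,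
    add_zero, zero_add, Matrix.zero_mul, Matrix.mul_zero,
    show ¬(2:ℕ) = 1 by norm_num]
  match_scalars <;> (try ring1) <;> simp [Complex.I_sq] <;> try ring1
end
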